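/- Let H be a connected 3-regular graph with |V(H)| ≥ 6, let p be a positive integer with p ≤ |V(H)| − 1, and set k = 3p + 10. Let G be constructed as follows: subdivide every edge of H once, letting V_E denote the set of subdivision vertices; attach to each original vertex of H a pendant path on p + 2 vertices; add p + 4 pairwise disjoint spiders, each obtained from K_{1,3} by subdividing each edge p + 5 times (so that the center is at distance p + 6 from each of its three leaves); and, for an arbitrary injection f from the set R of spider centers to V_E, add the edge {r, f(r)} for each r ∈ R (such an injection exists since |V_E| = 3|V(H)|/2 ≥ p + 4). Then vi(G) ≤ k if and only if H has a vertex cover of size at most p. -/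
import Mathlib


namespace VI

open SimpleGraph

variable {V : Type*}

/-- Total weight of a set of vertices. -/
noncomputable def setWeight (w : V → ℕ) (X : Set V) : ℕ := ∑ᶠ v ∈ X, w v

/-- Maximum weight of a connected component of `G − S`. -/
noncomputable def compMax (G : SimpleGraph V) (w : V → ℕ) (S : Set V) : ℕ :=
  sSup {n | ∃ C : (G.induce Sᶜ).ConnectedComponent, n = setWeight w (Subtype.val '' C.supp)}

/-- `w(S) + max_{C ∈ cc(G−S)} w(V(C))`. -/
noncomputable def viCost (G : SimpleGraph V) (w : V → ℕ) (S : Set V) : ℕ :=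
  setWeight w S + compMax G w S

/-- The weighted vertex integrity of `G`. -/
noncomputable def wvi (G : SimpleGraph V) (w : V → ℕ) : ℕ := ⨅ S : Set V, viCost G w S

/-- Maximum number of vertices of a connected component of `G − S`. -/
noncomputable def uCompMax (G : SimpleGraph V) (S : Set V) : ℕ :=
  sSup {n | ∃ C : (G.induce Sᶜ).ConnectedComponent, n = C.supp.ncard}

/-- `|S| + max_{C ∈ cc(G−S)} |V(C)|`. -/
noncomputable def uViCost (G : SimpleGraph V) (S : Set V) : ℕ := S.ncard + uCompMax G S

/-- The (unweighted) vertex integrity of `G`. -/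
noncomputable def uvi (G : SimpleGraph V) : ℕ := ⨅ S : Set V, uViCost G S

/-- A vertex `v` is redundant w.r.t. `S` if at most one connected component of `G − S`
contains a neighbor of `v`. -/
def Redundant (G : SimpleGraph V) (S : Set V) (v : V) : Prop :=
  {C : (G.induce Sᶜ).ConnectedComponent | ∃ u : (Sᶜ : Set V), G.Adj v ↑u ∧ u ∈ C.supp}.Subsingleton

/-- `S` is irredundant if it contains no redundant vertex. -/
def Irredundant (G : SimpleGraph V) (S : Set V) : Prop := ∀ v ∈ S, ¬ Redundant G S v

end VI

namespace VI

/-- Vertices: the original vertices of `H`; the subdivision vertices (one for each edge of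
`H`); the pendant paths on `p + 2` vertices; and `p + 4` spiders, each consisting of a
center (`.inl ()`) together with three paths on `p + 6` vertices. -/
def SpVertex (V : Type*) (H : SimpleGraph V) (p : ℕ) : Type _ :=
  V ⊕ H.edgeSet ⊕ (V × Fin (p + 2)) ⊕ (Fin (p + 4) × (Unit ⊕ Fin 3 × Fin (p + 6)))

/-- Edges: each subdivision vertex is joined to the two endpoints of its edge; each vertex
`v` of `H` starts a pendant path on `p + 2` vertices; each spider center starts three paths
on `p + 6` vertices; and each spider center `r` is joined to the subdivision vertex `f r`. -/
def spRel {V : Type*} (H : SimpleGraph V) (p : ℕ) (f : Fin (p + 4) → H.edgeSet) :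
    SpVertex V H p → SpVertex V H p → Prop
  | .inl u, .inr (.inl e) => u ∈ (e : Sym2 V)
  | .inl u, .inr (.inr (.inl (v, i))) => u = v ∧ (i : ℕ) = 0
  | .inr (.inr (.inl (v, i))), .inr (.inr (.inl (v', i'))) =>
      v = v' ∧ (i' : ℕ) = (i : ℕ) + 1
  | .inr (.inr (.inr (s, .inl _))), .inr (.inr (.inr (s', .inr (_, i)))) =>
      s = s' ∧ (i : ℕ) = 0
  | .inr (.inr (.inr (s, .inr (l, i)))), .inr (.inr (.inr (s', .inr (l', i')))) =>
      s = s' ∧ l = l' ∧ (i' : ℕ) = (i : ℕ) + 1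
  | .inr (.inr (.inr (s, .inl _))), .inr (.inl e) => e = f s
  | _, _ => False

/-- The graph of the reduction from Vertex Cover on cubic planar graphs. -/
def spGraph {V : Type*} (H : SimpleGraph V) (p : ℕ) (f : Fin (p + 4) → H.edgeSet) :
    SimpleGraph (SpVertex V H p) :=
  SimpleGraph.fromRel (spRel H p f)

end VI


namespace VI

open SimpleGraph

/-! ### Generic lemmas about `uvi` -/

section Generic
variable {W : Type*}

lemma uvi_le (G : SimpleGraph W) (S : Set W) : uvi G ≤ uViCost G S :=
  ciInf_le (OrderBot.bddBelow _) S

lemma exists_uvi (G : SimpleGraph W) : ∃ S : Set W, uViCost G S = uvi G := by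
  have h : uvi G ∈ Set.range (uViCost G) := by
    rw [uvi, iInf]
    exact Nat.sInf_mem (Set.range_nonempty _)
  exact h

lemma uCompMax_le [Finite W] (G : SimpleGraph W) (S : Set W) (m : ℕ)
    (h : ∀ C : (G.induce Sᶜ).ConnectedComponent, C.supp.ncard ≤ m) : uCompMax G S ≤ m := by
  rcases Set.eq_empty_or_nonempty {n | ∃ C : (G.induce Sᶜ).ConnectedComponent, n = C.supp.ncard}
    with he | hne
  · rw [uCompMax, he, csSup_empty]; exact Nat.zero_le m
  · exact csSup_le hne (by rintro n ⟨C, rfl⟩; exact h C)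

lemma le_uCompMax [Finite W] (G : SimpleGraph W) (S : Set W)
    (x : (Sᶜ : Set W)) (A : Set W)
    (h : ∀ a ∈ A, ∃ ha : a ∈ Sᶜ, (G.induce Sᶜ).Reachable x ⟨a, ha⟩) :
    A.ncard ≤ uCompMax G S := by
  set C := (G.induce Sᶜ).connectedComponentMk x with hC
  have hsub : A ⊆ Subtype.val '' C.supp := by
    intro a ha
    obtain ⟨haS, hr⟩ := h a ha
    exact ⟨⟨a, haS⟩, by simpa [ConnectedComponent.mem_supp_iff, hC] using hr.symm, rfl⟩
  have h1 : A.ncard ≤ (Subtype.val '' C.supp).ncard :=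
    Set.ncard_le_ncard hsub (Set.toFinite _)
  have h2 : (Subtype.val '' C.supp).ncard = C.supp.ncard :=
    Set.ncard_image_of_injective _ Subtype.val_injective
  have h3 : C.supp.ncard ≤ uCompMax G S := by
    apply le_csSup
    · apply Set.Finite.bddAbove
      have : {n | ∃ C : (G.induce Sᶜ).ConnectedComponent, n = C.supp.ncard} =
          Set.range (fun C : (G.induce Sᶜ).ConnectedComponent => C.supp.ncard) := by
        ext n; simp [eq_comm]
      rw [this]
      exact Set.finite_range _
    · exact ⟨C, rfl⟩
  omega

lemma eq_of_reachable {W' : Type*} (G' : SimpleGraph W') {ι : Type*} (g : W' → ι)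
    (hpres : ∀ a b : W', G'.Adj a b → g a = g b) {x y : W'} (h : G'.Reachable x y) :
    g x = g y := by
  obtain ⟨w⟩ := h
  induction w with
  | nil => rfl
  | cons h w ih => exact (hpres _ _ h).trans ih

lemma ncard_range {α β : Type*} [Fintype α] {g : α → β} (hg : Function.Injective g) :
    (Set.range g).ncard = Fintype.card α := by
  rw [← Set.image_univ, Set.ncard_image_of_injective _ hg, Set.ncard_univ,
    Nat.card_eq_fintype_card]

end Generic

/-! ### Named vertices of `SpVertex` -/

section Vertices
variable {V : Type*} {H : SimpleGraph V} {p : ℕ} {f : Fin (p + 4) → H.edgeSet}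

def orig (H : SimpleGraph V) (p : ℕ) (v : V) : SpVertex V H p := Sum.inl v
def esub (H : SimpleGraph V) (p : ℕ) (e : H.edgeSet) : SpVertex V H p := Sum.inr (Sum.inl e)
def pend (H : SimpleGraph V) (p : ℕ) (v : V) (i : Fin (p+2)) : SpVertex V H p :=
  Sum.inr (Sum.inr (Sum.inl (v, i)))
def spv (H : SimpleGraph V) (p : ℕ) (s : Fin (p+4)) (y : Unit ⊕ Fin 3 × Fin (p+6)) :
    SpVertex V H p := Sum.inr (Sum.inr (Sum.inr (s, y)))
def ctr (H : SimpleGraph V) (p : ℕ) (s : Fin (p+4)) : SpVertex V H p := spv H p s (Sum.inl ())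
def leg (H : SimpleGraph V) (p : ℕ) (s : Fin (p+4)) (l : Fin 3) (i : Fin (p+6)) :
    SpVertex V H p := spv H p s (Sum.inr (l, i))

instance [Finite V] : Finite (SpVertex V H p) := by
  unfold SpVertex; exact inferInstance

/-- Every vertex has one of five shapes. -/
lemma sp_cases (x : SpVertex V H p) :
    (∃ v, x = orig H p v) ∨ (∃ e, x = esub H p e) ∨ (∃ v i, x = pend H p v i) ∨
      (∃ s, x = ctr H p s) ∨ (∃ s l i, x = leg H p s l i) := by
  rcases x with v | e | ⟨v, i⟩ | ⟨s, u | ⟨l, i⟩⟩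
  · exact Or.inl ⟨v, rfl⟩
  · exact Or.inr (Or.inl ⟨e, rfl⟩)
  · exact Or.inr (Or.inr (Or.inl ⟨v, i, rfl⟩))
  · exact Or.inr (Or.inr (Or.inr (Or.inl ⟨s, rfl⟩)))
  · exact Or.inr (Or.inr (Or.inr (Or.inr ⟨s, l, i, rfl⟩)))

-- decoders
def toOrig : SpVertex V H p → Option V
  | Sum.inl v => some v
  | Sum.inr _ => none
def toEsub : SpVertex V H p → Option H.edgeSet
  | Sum.inr (Sum.inl e) => some e
  | _ => none
def toPend : SpVertex V H p → Option (V × Fin (p+2))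
  | Sum.inr (Sum.inr (Sum.inl x)) => some x
  | _ => none
def toSpv : SpVertex V H p → Option (Fin (p+4) × (Unit ⊕ Fin 3 × Fin (p+6)))
  | Sum.inr (Sum.inr (Sum.inr x)) => some x
  | _ => none

@[simp] lemma orig_inj {v v' : V} : orig H p v = orig H p v' ↔ v = v' :=
  ⟨fun h => by simpa [toOrig, orig] using congrArg toOrig h, fun h => by rw [h]⟩
@[simp] lemma esub_inj {e e' : H.edgeSet} : esub H p e = esub H p e' ↔ e = e' :=
  ⟨fun h => by simpa [toEsub, esub] using congrArg toEsub h, fun h => by rw [h]⟩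
@[simp] lemma pend_inj {v v' : V} {i i' : Fin (p+2)} :
    pend H p v i = pend H p v' i' ↔ v = v' ∧ i = i' := by
  constructor
  · intro h
    have := congrArg toPend h
    simp [toPend, pend, Prod.ext_iff] at this
    exact this
  · rintro ⟨rfl, rfl⟩; rfl
@[simp] lemma spv_inj {s s' : Fin (p+4)} {y y' : Unit ⊕ Fin 3 × Fin (p+6)} :
    spv H p s y = spv H p s' y' ↔ s = s' ∧ y = y' := by
  constructor
  · intro h
    have := congrArg toSpv h
    simp [toSpv, spv, Prod.ext_iff] at this
    exact this
  · rintro ⟨rfl, rfl⟩; rfl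
@[simp] lemma ctr_inj {s s' : Fin (p+4)} : ctr H p s = ctr H p s' ↔ s = s' := by
  simp [ctr]
@[simp] lemma leg_inj {s s' : Fin (p+4)} {l l' : Fin 3} {i i' : Fin (p+6)} :
    leg H p s l i = leg H p s' l' i' ↔ s = s' ∧ l = l' ∧ i = i' := by
  simp [leg, Prod.ext_iff, and_assoc]
@[simp] lemma ctr_ne_leg {s s' : Fin (p+4)} {l : Fin 3} {i : Fin (p+6)} :
    ¬ ctr H p s = leg H p s' l i := by
  simp [ctr, leg]
@[simp] lemma leg_ne_ctr {s s' : Fin (p+4)} {l : Fin 3} {i : Fin (p+6)} :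
    ¬ leg H p s l i = ctr H p s' := by
  simp [ctr, leg]

@[simp] lemma orig_ne_esub {v : V} {e : H.edgeSet} : ¬ orig H p v = esub H p e :=
  fun h => by simpa [toOrig, orig, esub] using congrArg toOrig h
@[simp] lemma esub_ne_orig {v : V} {e : H.edgeSet} : ¬ esub H p e = orig H p v :=
  fun h => orig_ne_esub h.symm
@[simp] lemma orig_ne_pend {v v' : V} {i : Fin (p+2)} : ¬ orig H p v = pend H p v' i :=
  fun h => by simpa [toOrig, orig, pend] using congrArg toOrig h
@[simp] lemma pend_ne_orig {v v' : V} {i : Fin (p+2)} : ¬ pend H p v' i = orig H p v :=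
  fun h => orig_ne_pend h.symm
@[simp] lemma orig_ne_spv {v : V} {s : Fin (p+4)} {y : Unit ⊕ Fin 3 × Fin (p+6)} :
    ¬ orig H p v = spv H p s y :=
  fun h => by simpa [toOrig, orig, spv] using congrArg toOrig h
@[simp] lemma spv_ne_orig {v : V} {s : Fin (p+4)} {y : Unit ⊕ Fin 3 × Fin (p+6)} :
    ¬ spv H p s y = orig H p v :=
  fun h => orig_ne_spv h.symm
@[simp] lemma esub_ne_pend {e : H.edgeSet} {v : V} {i : Fin (p+2)} :
    ¬ esub H p e = pend H p v i :=
  fun h => by simpa [toEsub, esub, pend] using congrArg toEsub h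
@[simp] lemma pend_ne_esub {e : H.edgeSet} {v : V} {i : Fin (p+2)} :
    ¬ pend H p v i = esub H p e :=
  fun h => esub_ne_pend h.symm
@[simp] lemma esub_ne_spv {e : H.edgeSet} {s : Fin (p+4)} {y : Unit ⊕ Fin 3 × Fin (p+6)} :
    ¬ esub H p e = spv H p s y :=
  fun h => by simpa [toEsub, esub, spv] using congrArg toEsub h
@[simp] lemma spv_ne_esub {e : H.edgeSet} {s : Fin (p+4)} {y : Unit ⊕ Fin 3 × Fin (p+6)} :
    ¬ spv H p s y = esub H p e :=
  fun h => esub_ne_spv h.symm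
@[simp] lemma pend_ne_spv {v : V} {i : Fin (p+2)} {s : Fin (p+4)}
    {y : Unit ⊕ Fin 3 × Fin (p+6)} : ¬ pend H p v i = spv H p s y :=
  fun h => by simpa [toPend, pend, spv] using congrArg toPend h
@[simp] lemma spv_ne_pend {v : V} {i : Fin (p+2)} {s : Fin (p+4)}
    {y : Unit ⊕ Fin 3 × Fin (p+6)} : ¬ spv H p s y = pend H p v i :=
  fun h => pend_ne_spv h.symm

@[simp] lemma orig_ne_ctr {v : V} {s : Fin (p+4)} : ¬ orig H p v = ctr H p s := orig_ne_spv
@[simp] lemma ctr_ne_orig {v : V} {s : Fin (p+4)} : ¬ ctr H p s = orig H p v := spv_ne_orig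
@[simp] lemma orig_ne_leg {v : V} {s : Fin (p+4)} {l : Fin 3} {i : Fin (p+6)} :
    ¬ orig H p v = leg H p s l i := orig_ne_spv
@[simp] lemma leg_ne_orig {v : V} {s : Fin (p+4)} {l : Fin 3} {i : Fin (p+6)} :
    ¬ leg H p s l i = orig H p v := spv_ne_orig
@[simp] lemma esub_ne_ctr {e : H.edgeSet} {s : Fin (p+4)} : ¬ esub H p e = ctr H p s := esub_ne_spv
@[simp] lemma ctr_ne_esub {e : H.edgeSet} {s : Fin (p+4)} : ¬ ctr H p s = esub H p e := spv_ne_esub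
@[simp] lemma esub_ne_leg {e : H.edgeSet} {s : Fin (p+4)} {l : Fin 3} {i : Fin (p+6)} :
    ¬ esub H p e = leg H p s l i := esub_ne_spv
@[simp] lemma leg_ne_esub {e : H.edgeSet} {s : Fin (p+4)} {l : Fin 3} {i : Fin (p+6)} :
    ¬ leg H p s l i = esub H p e := spv_ne_esub
@[simp] lemma pend_ne_ctr {v : V} {i : Fin (p+2)} {s : Fin (p+4)} :
    ¬ pend H p v i = ctr H p s := pend_ne_spv
@[simp] lemma ctr_ne_pend {v : V} {i : Fin (p+2)} {s : Fin (p+4)} :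
    ¬ ctr H p s = pend H p v i := spv_ne_pend
@[simp] lemma pend_ne_leg {v : V} {i : Fin (p+2)} {s : Fin (p+4)} {l : Fin 3} {i' : Fin (p+6)} :
    ¬ pend H p v i = leg H p s l i' := pend_ne_spv
@[simp] lemma leg_ne_pend {v : V} {i : Fin (p+2)} {s : Fin (p+4)} {l : Fin 3} {i' : Fin (p+6)} :
    ¬ leg H p s l i' = pend H p v i := spv_ne_pend

end Vertices

/-! ### Adjacency in `spGraph` -/

section Adj
variable {V : Type*} {H : SimpleGraph V} {p : ℕ} {f : Fin (p + 4) → H.edgeSet}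

lemma adj_orig_esub {u : V} {e : H.edgeSet} (h : u ∈ (e : Sym2 V)) :
    (spGraph H p f).Adj (orig H p u) (esub H p e) := by
  rw [spGraph, SimpleGraph.fromRel_adj]
  exact ⟨orig_ne_esub, Or.inl h⟩

lemma adj_orig_pend {v : V} {i : Fin (p+2)} (h : (i : ℕ) = 0) :
    (spGraph H p f).Adj (orig H p v) (pend H p v i) := by
  rw [spGraph, SimpleGraph.fromRel_adj]
  exact ⟨orig_ne_pend, Or.inl ⟨rfl, h⟩⟩

lemma adj_pend_succ {v : V} {i i' : Fin (p+2)} (h : (i' : ℕ) = (i : ℕ) + 1) :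
    (spGraph H p f).Adj (pend H p v i) (pend H p v i') := by
  rw [spGraph, SimpleGraph.fromRel_adj]
  refine ⟨fun he => ?_, Or.inl ⟨rfl, h⟩⟩
  rw [pend_inj] at he
  have := congrArg Fin.val he.2
  omega

lemma adj_ctr_leg {s : Fin (p+4)} {l : Fin 3} {i : Fin (p+6)} (h : (i : ℕ) = 0) :
    (spGraph H p f).Adj (ctr H p s) (leg H p s l i) := by
  rw [spGraph, SimpleGraph.fromRel_adj]
  exact ⟨ctr_ne_leg, Or.inl ⟨rfl, h⟩⟩

lemma adj_leg_succ {s : Fin (p+4)} {l : Fin 3} {i i' : Fin (p+6)} (h : (i' : ℕ) = (i : ℕ) + 1) :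
    (spGraph H p f).Adj (leg H p s l i) (leg H p s l i') := by
  rw [spGraph, SimpleGraph.fromRel_adj]
  refine ⟨fun he => ?_, Or.inl ⟨rfl, rfl, h⟩⟩
  rw [leg_inj] at he
  have := congrArg Fin.val he.2.2
  omega

end Adj

/-! ### Special sets of vertices and their cardinalities -/

section Sets
variable {V : Type*} {H : SimpleGraph V} {p : ℕ}

def PendSet (H : SimpleGraph V) (p : ℕ) (v : V) : Set (SpVertex V H p) := Set.range (pend H p v)
def TreeSet (H : SimpleGraph V) (p : ℕ) (v : V) : Set (SpVertex V H p) :=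
  insert (orig H p v) (PendSet H p v)
def LegSet (H : SimpleGraph V) (p : ℕ) (s : Fin (p+4)) (l : Fin 3) : Set (SpVertex V H p) :=
  Set.range (leg H p s l)
def SpSet (H : SimpleGraph V) (p : ℕ) (s : Fin (p+4)) : Set (SpVertex V H p) :=
  Set.range (spv H p s)

lemma pend_injective (v : V) : Function.Injective (pend H p v) := by
  intro a b h; exact (pend_inj.mp h).2
lemma esub_injective : Function.Injective (esub H p) := by
  intro a b h; exact esub_inj.mp h
lemma spv_injective (s : Fin (p+4)) : Function.Injective (spv H p s) := by
  intro a b h; exact (spv_inj.mp h).2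
lemma leg_injective (s : Fin (p+4)) (l : Fin 3) : Function.Injective (leg H p s l) := by
  intro a b h; exact (leg_inj.mp h).2.2
lemma ctr_injective : Function.Injective (ctr H p (V := V)) := by
  intro a b h; exact ctr_inj.mp h

lemma mem_TreeSet {x : SpVertex V H p} {v : V} :
    x ∈ TreeSet H p v ↔ x = orig H p v ∨ ∃ i, x = pend H p v i := by
  simp [TreeSet, PendSet, eq_comm]

lemma ncard_PendSet (v : V) : (PendSet H p v).ncard = p + 2 := by
  rw [PendSet, ncard_range (pend_injective v)]; simp

lemma ncard_TreeSet (v : V) : (TreeSet H p v).ncard = p + 3 := by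
  have hfin : (PendSet H p v).Finite := by rw [PendSet]; exact Set.finite_range _
  rw [TreeSet, Set.ncard_insert_of_notMem ?h hfin, ncard_PendSet]
  rintro hmem
  rw [PendSet] at hmem
  obtain ⟨i, hi⟩ := hmem
  exact pend_ne_orig hi

lemma ncard_LegSet (s : Fin (p+4)) (l : Fin 3) : (LegSet H p s l).ncard = p + 6 := by
  rw [LegSet, ncard_range (leg_injective s l)]; simp

lemma ncard_SpSet (s : Fin (p+4)) : (SpSet H p s).ncard = 3 * p + 19 := by
  rw [SpSet, ncard_range (spv_injective s)]
  simp only [Fintype.card_sum, Fintype.card_prod, Fintype.card_unit, Fintype.card_fin]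
  omega

lemma treeSet_disjoint {u v : V} (huv : u ≠ v) : Disjoint (TreeSet H p u) (TreeSet H p v) := by
  rw [Set.disjoint_left]
  intro x hxu hxv
  rw [mem_TreeSet] at hxu hxv
  rcases hxu with rfl | ⟨i, rfl⟩ <;> rcases hxv with h | ⟨j, h⟩ <;> simp_all

/-- In a 3-regular graph, at most 3 edges contain a given vertex. -/
lemma ncard_incident [Fintype V] [DecidableRel H.Adj] (hreg : H.IsRegularOfDegree 3) (v : V) :
    {e : H.edgeSet | v ∈ (e : Sym2 V)}.ncard ≤ 3 := by
  classical
  have hmap : ∀ e ∈ {e : H.edgeSet | v ∈ (e : Sym2 V)},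
      (fun e : H.edgeSet => if h : v ∈ (e : Sym2 V) then Sym2.Mem.other h else v) e ∈
        H.neighborSet v := by
    intro e he
    simp only [Set.mem_setOf_eq] at he
    simp only [dif_pos he]
    have := e.prop
    rw [← Sym2.other_spec he, SimpleGraph.mem_edgeSet] at this
    exact this
  have hinj : Set.InjOn (fun e : H.edgeSet => if h : v ∈ (e : Sym2 V) then Sym2.Mem.other h else v)
      {e : H.edgeSet | v ∈ (e : Sym2 V)} := by
    intro e1 h1 e2 h2 heq
    simp only [Set.mem_setOf_eq] at h1 h2
    simp only [dif_pos h1, dif_pos h2] at heq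
    apply Subtype.ext
    rw [← Sym2.other_spec h1, ← Sym2.other_spec h2, heq]
  have := Set.ncard_le_ncard_of_injOn _ hmap hinj (Set.toFinite _)
  refine this.trans ?_
  have h3 : (H.neighborSet v).ncard = H.degree v := by
    rw [Set.ncard_eq_toFinset_card', SimpleGraph.degree, SimpleGraph.neighborFinset_def]
  rw [h3, hreg v]

end Sets


/-! ### Reachability along paths -/

section Reach
variable {V : Type*} {H : SimpleGraph V} {p : ℕ} {f : Fin (p + 4) → H.edgeSet}
  {D : Set (SpVertex V H p)}

lemma reach_orig_pend {v : V} (hv : orig H p v ∈ Dᶜ) (hp' : ∀ i, pend H p v i ∈ Dᶜ)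
    (i : Fin (p+2)) :
    ((spGraph H p f).induce Dᶜ).Reachable ⟨orig H p v, hv⟩ ⟨pend H p v i, hp' i⟩ := by
  suffices h : ∀ (n : ℕ) (hn : n < p+2),
      ((spGraph H p f).induce Dᶜ).Reachable ⟨orig H p v, hv⟩ ⟨pend H p v ⟨n, hn⟩, hp' _⟩ by
    exact h i.1 i.2
  intro n
  induction n with
  | zero => exact fun hn => SimpleGraph.Adj.reachable (adj_orig_pend rfl)
  | succ n ih =>
      intro hn
      exact (ih (by omega)).trans (SimpleGraph.Adj.reachable (adj_pend_succ rfl))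

lemma reach_ctr_leg {s : Fin (p+4)} {l : Fin 3} (hc : ctr H p s ∈ Dᶜ)
    (hl : ∀ i, leg H p s l i ∈ Dᶜ) (i : Fin (p+6)) :
    ((spGraph H p f).induce Dᶜ).Reachable ⟨ctr H p s, hc⟩ ⟨leg H p s l i, hl i⟩ := by
  suffices h : ∀ (n : ℕ) (hn : n < p+6),
      ((spGraph H p f).induce Dᶜ).Reachable ⟨ctr H p s, hc⟩ ⟨leg H p s l ⟨n, hn⟩, hl _⟩ by
    exact h i.1 i.2
  intro n
  induction n with
  | zero => exact fun hn => SimpleGraph.Adj.reachable (adj_ctr_leg rfl)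
  | succ n ih =>
      intro hn
      exact (ih (by omega)).trans (SimpleGraph.Adj.reachable (adj_leg_succ rfl))

lemma reach_leg_leg {s : Fin (p+4)} {l : Fin 3} (hl : ∀ i, leg H p s l i ∈ Dᶜ)
    (i : Fin (p+6)) :
    ((spGraph H p f).induce Dᶜ).Reachable ⟨leg H p s l ⟨0, by omega⟩, hl _⟩
      ⟨leg H p s l i, hl i⟩ := by
  suffices h : ∀ (n : ℕ) (hn : n < p+6),
      ((spGraph H p f).induce Dᶜ).Reachable ⟨leg H p s l ⟨0, by omega⟩, hl _⟩
        ⟨leg H p s l ⟨n, hn⟩, hl _⟩ by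
    exact h i.1 i.2
  intro n
  induction n with
  | zero => exact fun hn => SimpleGraph.Reachable.refl _
  | succ n ih =>
      intro hn
      exact (ih (by omega)).trans (SimpleGraph.Adj.reachable (adj_leg_succ rfl))

end Reach

/-! ### The region map used to bound component sizes -/

section Regio
variable {V : Type*} {H : SimpleGraph V} {p : ℕ} {f : Fin (p + 4) → H.edgeSet}

/-- The deletion set used in the backward direction. -/
def Dset (H : SimpleGraph V) (p : ℕ) (S : Set V) : Set (SpVertex V H p) :=
  (orig H p '' S) ∪ Set.range (ctr H p)

open Classical in
/-- The region a vertex belongs to after deleting `Dset H p S`. -/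
noncomputable def regio (H : SimpleGraph V) (p : ℕ) (S : Set V) :
    SpVertex V H p → SpVertex V H p
  | Sum.inl v => orig H p v
  | Sum.inr (Sum.inl e) =>
      if h : ∃ u, u ∈ (e : Sym2 V) ∧ u ∉ S then orig H p h.choose else esub H p e
  | Sum.inr (Sum.inr (Sum.inl (v, _))) =>
      if v ∈ S then pend H p v ⟨0, by omega⟩ else orig H p v
  | Sum.inr (Sum.inr (Sum.inr (s, Sum.inl _))) => ctr H p s
  | Sum.inr (Sum.inr (Sum.inr (s, Sum.inr (l, _)))) => leg H p s l ⟨0, by omega⟩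

variable {S : Set V}

lemma regio_orig (v : V) : regio H p S (orig H p v) = orig H p v := rfl
open Classical in
lemma regio_esub (e : H.edgeSet) : regio H p S (esub H p e) =
    if h : ∃ u, u ∈ (e : Sym2 V) ∧ u ∉ S then orig H p h.choose else esub H p e := rfl
open Classical in
lemma regio_pend (v : V) (i : Fin (p+2)) : regio H p S (pend H p v i) =
    if v ∈ S then pend H p v ⟨0, by omega⟩ else orig H p v := rfl
lemma regio_ctr (s : Fin (p+4)) : regio H p S (ctr H p s) = ctr H p s := rfl
lemma regio_leg (s : Fin (p+4)) (l : Fin 3) (i : Fin (p+6)) :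
    regio H p S (leg H p s l i) = leg H p s l ⟨0, by omega⟩ := rfl

lemma orig_notMem_Dset {v : V} (h : orig H p v ∉ Dset H p S) : v ∉ S :=
  fun hv => h (Or.inl ⟨v, hv, rfl⟩)

lemma ctr_mem_Dset (s : Fin (p+4)) : ctr H p s ∈ Dset H p S := Or.inr ⟨s, rfl⟩

lemma regio_pres_rel (hcov : ∀ u v : V, H.Adj u v → u ∈ S ∨ v ∈ S)
    {x y : SpVertex V H p} (hx : x ∉ Dset H p S) (hy : y ∉ Dset H p S)
    (h : spRel H p f x y) : regio H p S x = regio H p S y := by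
  classical
  rcases sp_cases x with ⟨v, rfl⟩ | ⟨e, rfl⟩ | ⟨v, i, rfl⟩ | ⟨s, rfl⟩ | ⟨s, l, i, rfl⟩ <;>
    rcases sp_cases y with ⟨v', rfl⟩ | ⟨e', rfl⟩ | ⟨v', i', rfl⟩ | ⟨s', rfl⟩ | ⟨s', l', i', rfl⟩ <;>
    try exact (h : False).elim
  · -- orig v, esub e'
    have hmem : v ∈ (e' : Sym2 V) := h
    have hvS : v ∉ S := orig_notMem_Dset hx
    have hex : ∃ u, u ∈ (e' : Sym2 V) ∧ u ∉ S := ⟨v, hmem, hvS⟩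
    rw [regio_orig, regio_esub, dif_pos hex]
    obtain ⟨hc1, hc2⟩ := hex.choose_spec
    rw [orig_inj]
    by_contra hne
    have hz := (Sym2.mem_and_mem_iff hne).mp ⟨hmem, hc1⟩
    have hadj : H.Adj v hex.choose := by
      rw [← SimpleGraph.mem_edgeSet, ← hz]
      exact e'.prop
    rcases hcov _ _ hadj with h' | h'
    · exact hvS h'
    · exact hc2 h'
  · -- orig v, pend v' i'
    obtain ⟨rfl, -⟩ : v = v' ∧ (i' : ℕ) = 0 := h
    rw [regio_orig, regio_pend, if_neg (orig_notMem_Dset hx)]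
  · -- pend v i, pend v' i'
    obtain ⟨rfl, -⟩ : v = v' ∧ (i' : ℕ) = (i : ℕ) + 1 := h
    rw [regio_pend, regio_pend]
  · -- ctr s, esub e'
    exact absurd (ctr_mem_Dset s) hx
  · -- ctr s, leg s' l' i'
    exact absurd (ctr_mem_Dset s) hx
  · -- leg s l i, leg s' l' i'
    obtain ⟨rfl, rfl, -⟩ : s = s' ∧ l = l' ∧ (i' : ℕ) = (i : ℕ) + 1 := h
    rw [regio_leg, regio_leg]

lemma regio_pres (hcov : ∀ u v : V, H.Adj u v → u ∈ S ∨ v ∈ S)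
    {x y : SpVertex V H p} (hx : x ∉ Dset H p S) (hy : y ∉ Dset H p S)
    (h : (spGraph H p f).Adj x y) : regio H p S x = regio H p S y := by
  rw [spGraph, SimpleGraph.fromRel_adj] at h
  rcases h.2 with h' | h'
  · exact regio_pres_rel hcov hx hy h'
  · exact (regio_pres_rel hcov hy hx h').symm

/-- Each fiber of `regio` (on surviving vertices) has at most `p + 6` elements. -/
lemma regio_fiber [Fintype V] [DecidableRel H.Adj] (hreg : H.IsRegularOfDegree 3)
    (z : SpVertex V H p) :
    {x : SpVertex V H p | regio H p S x = regio H p S z}.ncard ≤ p + 6 := by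
  classical
  -- first: fibers over each possible value shape
  have fiber_orig : ∀ v : V, {x : SpVertex V H p | regio H p S x = orig H p v}.ncard ≤ p + 6 := by
    intro v
    have hsub : {x : SpVertex V H p | regio H p S x = orig H p v} ⊆
        ({orig H p v} ∪ esub H p '' {e | v ∈ (e : Sym2 V)}) ∪ PendSet H p v := by
      intro x hx
      simp only [Set.mem_setOf_eq] at hx
      rcases sp_cases x with ⟨w, rfl⟩ | ⟨e, rfl⟩ | ⟨w, i, rfl⟩ | ⟨s, rfl⟩ | ⟨s, l, i, rfl⟩
      · rw [regio_orig, orig_inj] at hx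
        exact Or.inl (Or.inl (by simp [hx]))
      · rw [regio_esub] at hx
        split_ifs at hx with hex
        · rw [orig_inj] at hx
          refine Or.inl (Or.inr ⟨e, ?_, rfl⟩)
          have := hex.choose_spec.1
          rwa [hx] at this
        · exact absurd hx esub_ne_orig
      · rw [regio_pend] at hx
        split_ifs at hx with hw
        · exact absurd hx pend_ne_orig
        · rw [orig_inj] at hx
          exact Or.inr ⟨i, by rw [hx]⟩
      · exact absurd hx ctr_ne_orig
      · exact absurd hx leg_ne_orig
    refine (Set.ncard_le_ncard hsub (Set.toFinite _)).trans ?_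
    refine (Set.ncard_union_le _ _).trans ?_
    have h1 : ({orig H p v} ∪ esub H p '' {e | v ∈ (e : Sym2 V)} : Set (SpVertex V H p)).ncard
        ≤ 1 + 3 := by
      refine (Set.ncard_union_le _ _).trans ?_
      have := (Set.ncard_image_le (f := esub H p)
        (s := {e : H.edgeSet | v ∈ (e : Sym2 V)}) (Set.toFinite _)).trans
        (ncard_incident hreg v)
      simpa using add_le_add (le_refl 1) this
    rw [ncard_PendSet]
    omega
  rcases sp_cases z with ⟨v, rfl⟩ | ⟨e, rfl⟩ | ⟨v, i, rfl⟩ | ⟨s, rfl⟩ | ⟨s, l, i, rfl⟩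
  · rw [regio_orig]; exact fiber_orig v
  · rw [regio_esub]
    split_ifs with hex
    · exact fiber_orig _
    · -- fiber over `esub e` is contained in `{esub e}`
      have hsub : {x : SpVertex V H p | regio H p S x = esub H p e} ⊆ {esub H p e} := by
        intro x hx
        simp only [Set.mem_setOf_eq] at hx
        rcases sp_cases x with ⟨w, rfl⟩ | ⟨e', rfl⟩ | ⟨w, j, rfl⟩ | ⟨s, rfl⟩ | ⟨s, l, j, rfl⟩
        · exact absurd hx orig_ne_esub
        · rw [regio_esub] at hx
          split_ifs at hx with hex'
          · exact absurd hx orig_ne_esub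
          · rw [esub_inj] at hx; simp [hx]
        · rw [regio_pend] at hx
          split_ifs at hx
          · exact absurd hx pend_ne_esub
          · exact absurd hx orig_ne_esub
        · exact absurd hx ctr_ne_esub
        · exact absurd hx leg_ne_esub
      refine (Set.ncard_le_ncard hsub (Set.toFinite _)).trans ?_
      simp
  · rw [regio_pend]
    split_ifs with hv
    · -- fiber over `pend v 0` is contained in `PendSet v`
      have hsub : {x : SpVertex V H p | regio H p S x = pend H p v ⟨0, by omega⟩} ⊆
          PendSet H p v := by
        intro x hx
        simp only [Set.mem_setOf_eq] at hx
        rcases sp_cases x with ⟨w, rfl⟩ | ⟨e', rfl⟩ | ⟨w, j, rfl⟩ | ⟨s, rfl⟩ | ⟨s, l, j, rfl⟩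
        · exact absurd hx orig_ne_pend
        · rw [regio_esub] at hx
          split_ifs at hx
          · exact absurd hx orig_ne_pend
          · exact absurd hx esub_ne_pend
        · rw [regio_pend] at hx
          split_ifs at hx
          · rw [pend_inj] at hx
            exact ⟨j, by rw [hx.1]⟩
          · exact absurd hx orig_ne_pend
        · exact absurd hx ctr_ne_pend
        · exact absurd hx leg_ne_pend
      refine (Set.ncard_le_ncard hsub (Set.toFinite _)).trans ?_
      rw [ncard_PendSet]
      omega
    · exact fiber_orig v
  · rw [regio_ctr]
    have hsub : {x : SpVertex V H p | regio H p S x = ctr H p s} ⊆ {ctr H p s} := by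
      intro x hx
      simp only [Set.mem_setOf_eq] at hx
      rcases sp_cases x with ⟨w, rfl⟩ | ⟨e', rfl⟩ | ⟨w, j, rfl⟩ | ⟨s', rfl⟩ | ⟨s', l, j, rfl⟩
      · exact absurd hx orig_ne_ctr
      · rw [regio_esub] at hx
        split_ifs at hx
        · exact absurd hx orig_ne_ctr
        · exact absurd hx esub_ne_ctr
      · rw [regio_pend] at hx
        split_ifs at hx
        · exact absurd hx pend_ne_ctr
        · exact absurd hx orig_ne_ctr
      · rw [regio_ctr, ctr_inj] at hx; simp [hx]
      · exact absurd (regio_leg (S := S) s' l j ▸ hx) leg_ne_ctr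
    refine (Set.ncard_le_ncard hsub (Set.toFinite _)).trans ?_
    simp
  · rw [regio_leg]
    have hsub : {x : SpVertex V H p | regio H p S x = leg H p s l ⟨0, by omega⟩} ⊆
        LegSet H p s l := by
      intro x hx
      simp only [Set.mem_setOf_eq] at hx
      rcases sp_cases x with ⟨w, rfl⟩ | ⟨e', rfl⟩ | ⟨w, j, rfl⟩ | ⟨s', rfl⟩ | ⟨s', l', j, rfl⟩
      · exact absurd hx orig_ne_leg
      · rw [regio_esub] at hx
        split_ifs at hx
        · exact absurd hx orig_ne_leg
        · exact absurd hx esub_ne_leg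
      · rw [regio_pend] at hx
        split_ifs at hx
        · exact absurd hx pend_ne_leg
        · exact absurd hx orig_ne_leg
      · exact absurd hx ctr_ne_leg
      · rw [regio_leg, leg_inj] at hx
        exact ⟨j, by rw [hx.1, hx.2.1]⟩
    refine (Set.ncard_le_ncard hsub (Set.toFinite _)).trans ?_
    rw [ncard_LegSet]

set_option maxHeartbeats 1000000 in
/-- Every connected component of `G − Dset` has at most `p + 6` vertices. -/
lemma comp_bound [Fintype V] [DecidableRel H.Adj] (hreg : H.IsRegularOfDegree 3)
    (hcov : ∀ u v : V, H.Adj u v → u ∈ S ∨ v ∈ S)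
    (C : ((spGraph H p f).induce (Dset H p S)ᶜ).ConnectedComponent) :
    C.supp.ncard ≤ p + 6 := by
  classical
  induction C using SimpleGraph.ConnectedComponent.ind with
  | _ x =>
    have key : Subtype.val ''
        (((spGraph H p f).induce (Dset H p S)ᶜ).connectedComponentMk x).supp ⊆
          {y | regio H p S y = regio H p S ↑x} := by
      rintro y ⟨⟨y', hy'⟩, hmem, rfl⟩
      rw [SimpleGraph.ConnectedComponent.mem_supp_iff] at hmem
      have hreach := SimpleGraph.ConnectedComponent.exact hmem
      exact eq_of_reachable ((spGraph H p f).induce (Dset H p S)ᶜ)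
        (fun a => regio H p S (↑a : SpVertex V H p))
        (fun a b hab => regio_pres hcov a.prop b.prop hab) hreach
    have h1 := Set.ncard_le_ncard key (Set.toFinite _)
    rw [Set.ncard_image_of_injective _ Subtype.val_injective] at h1
    exact h1.trans (regio_fiber (S := S) hreg ((↑x : SpVertex V H p)))

end Regio

end VI

open VI SimpleGraph in
/-- `vi(G) ≤ 3p + 10` iff `H` has a vertex cover of size at most `p`. -/
theorem statement14 {V : Type*} [Fintype V] (H : SimpleGraph V) [DecidableRel H.Adj]
    (hconn : H.Connected) (hreg : H.IsRegularOfDegree 3) (hcard : 6 ≤ Fintype.card V)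
    (p k : ℕ) (hp : 0 < p) (hple : p ≤ Fintype.card V - 1) (hk : k = 3 * p + 10)
    (f : Fin (p + 4) → H.edgeSet) (hf : Function.Injective f) :
    uvi (spGraph H p f) ≤ k ↔
      ∃ S : Set V, (∀ u v : V, H.Adj u v → u ∈ S ∨ v ∈ S) ∧ S.ncard ≤ p := by
  classical
  subst hk
  constructor
  · -- forward direction
    intro huvi
    obtain ⟨D, hD⟩ := exists_uvi (spGraph H p f)
    have hcost : D.ncard + uCompMax (spGraph H p f) D ≤ 3 * p + 10 := hD.le.trans huvi
    have hDfin : D.Finite := Set.toFinite _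
    -- every spider meets D
    have hsp : ∀ s : Fin (p+4), ∃ x, x ∈ D ∧ x ∈ SpSet H p s := by
      intro s
      by_contra hcon
      push_neg at hcon
      have hDc : ∀ y ∈ SpSet H p s, y ∈ Dᶜ := fun y hy hyD => hcon y hyD hy
      have hle := le_uCompMax (spGraph H p f) D ⟨ctr H p s, hDc _ ⟨Sum.inl (), rfl⟩⟩
          (SpSet H p s) ?_
      · rw [ncard_SpSet] at hle; omega
      · rintro a ⟨y, rfl⟩
        refine ⟨hDc _ ⟨y, rfl⟩, ?_⟩
        rcases y with u | ⟨l, i⟩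
        · cases u
          exact SimpleGraph.Reachable.refl _
        · exact reach_ctr_leg (hDc _ ⟨Sum.inl (), rfl⟩)
            (fun j => hDc _ ⟨Sum.inr (l, j), rfl⟩) i
    choose gs hgsD hgsSp using hsp
    have hgs_inj : Function.Injective gs := by
      intro a b hab
      obtain ⟨y, hy⟩ := hgsSp a
      obtain ⟨y', hy'⟩ := hgsSp b
      have : spv H p a y = spv H p b y' := by rw [hy, hy', hab]
      exact (spv_inj.mp this).1
    have hX1n : (Set.range gs).ncard = p + 4 := by
      rw [ncard_range hgs_inj]; simp
    have hX1D : Set.range gs ⊆ D := by rintro _ ⟨s, rfl⟩; exact hgsD s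
    have hX1 : p + 4 ≤ D.ncard := by
      have := Set.ncard_le_ncard hX1D hDfin
      omega
    -- some component has at least p + 6 vertices
    have hM : p + 6 ≤ uCompMax (spGraph H p f) D := by
      by_cases hleg : ∃ s l, ∀ x ∈ D, x ∉ LegSet H p s l
      · obtain ⟨s, l, hsl⟩ := hleg
        have hDc : ∀ i, leg H p s l i ∈ Dᶜ := fun i hm => hsl _ hm ⟨i, rfl⟩
        have hle := le_uCompMax (spGraph H p f) D ⟨leg H p s l ⟨0, by omega⟩, hDc _⟩
            (LegSet H p s l) ?_
        · rwa [ncard_LegSet] at hle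
        · rintro a ⟨i, rfl⟩
          exact ⟨hDc i, reach_leg_leg hDc i⟩
      · exfalso
        push_neg at hleg
        choose gl hglD hglL using hleg
        have hinj : Function.Injective (fun q : Fin (p+4) × Fin 3 => gl q.1 q.2) := by
          intro a b hab
          obtain ⟨i, hi⟩ := hglL a.1 a.2
          obtain ⟨j, hj⟩ := hglL b.1 b.2
          have : leg H p a.1 a.2 i = leg H p b.1 b.2 j := by
            rw [hi, hj]; exact hab
          obtain ⟨h1, h2, -⟩ := leg_inj.mp this
          exact Prod.ext h1 h2
        have h2 : Set.range (fun q : Fin (p+4) × Fin 3 => gl q.1 q.2) ⊆ D := by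
          rintro _ ⟨q, rfl⟩; exact hglD q.1 q.2
        have h3 := Set.ncard_le_ncard h2 hDfin
        rw [ncard_range hinj] at h3
        simp only [Fintype.card_prod, Fintype.card_fin] at h3
        omega
    -- the candidate vertex cover
    set S0 : Set V := {v | ∃ x, x ∈ D ∧ x ∈ TreeSet H p v} with hS0def
    set Esub : Set H.edgeSet := {e | esub H p e ∈ D} with hEdef
    haveI : Nonempty (SpVertex V H p) := ⟨ctr H p ⟨0, by omega⟩⟩
    have hpick : ∀ v : V, v ∈ S0 → ∃ x, x ∈ D ∧ x ∈ TreeSet H p v := fun v hv => hv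
    choose! pick2 hp2D hp2T using hpick
    have hinj2 : Set.InjOn pick2 S0 := by
      intro a ha b hb hab
      by_contra hne
      have hTa := hp2T a ha
      have hTb := hp2T b hb
      rw [hab] at hTa
      exact (Set.disjoint_left.mp (treeSet_disjoint hne) hTa) hTb
    have hX2D : pick2 '' S0 ⊆ D := by rintro _ ⟨v, hv, rfl⟩; exact hp2D v hv
    have hX3D : D ∩ Set.range (esub H p) ⊆ D := Set.inter_subset_left
    have d12 : Disjoint (Set.range gs) (pick2 '' S0) := by
      rw [Set.disjoint_left]
      rintro x ⟨s, rfl⟩ ⟨v, hv, hx⟩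
      obtain ⟨y, hy⟩ := hgsSp s
      have hT := hp2T v hv
      rw [hx, ← hy] at hT
      rw [mem_TreeSet] at hT
      rcases hT with h' | ⟨i, h'⟩
      · exact spv_ne_orig h'
      · exact spv_ne_pend h'
    have d13 : Disjoint (Set.range gs) (D ∩ Set.range (esub H p)) := by
      rw [Set.disjoint_left]
      rintro x ⟨s, rfl⟩ ⟨-, e, he⟩
      obtain ⟨y, hy⟩ := hgsSp s
      rw [← hy] at he
      exact spv_ne_esub he.symm
    have d23 : Disjoint (pick2 '' S0) (D ∩ Set.range (esub H p)) := by
      rw [Set.disjoint_left]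
      rintro x ⟨v, hv, rfl⟩ ⟨-, e, he⟩
      have hT := hp2T v hv
      rw [mem_TreeSet] at hT
      rcases hT with h' | ⟨i, h'⟩
      · rw [h'] at he; exact esub_ne_orig he
      · rw [h'] at he; exact esub_ne_pend he
    have hsum : (Set.range gs).ncard + (pick2 '' S0).ncard
        + (D ∩ Set.range (esub H p)).ncard ≤ D.ncard := by
      have hu : Set.range gs ∪ pick2 '' S0 ∪ D ∩ Set.range (esub H p) ⊆ D := by
        intro x hx
        rcases hx with (hx | hx) | hx
        · exact hX1D hx
        · exact hX2D hx
        · exact hX3D hx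
      have e1 : (Set.range gs ∪ pick2 '' S0).ncard
          = (Set.range gs).ncard + (pick2 '' S0).ncard :=
        Set.ncard_union_eq d12 (Set.toFinite _) (Set.toFinite _)
      have e2 : (Set.range gs ∪ pick2 '' S0 ∪ D ∩ Set.range (esub H p)).ncard
          = (Set.range gs ∪ pick2 '' S0).ncard + (D ∩ Set.range (esub H p)).ncard :=
        Set.ncard_union_eq (Set.disjoint_union_left.mpr ⟨d13, d23⟩)
          (Set.toFinite _) (Set.toFinite _)
      have := Set.ncard_le_ncard hu hDfin
      omega
    have hX2n : (pick2 '' S0).ncard = S0.ncard := Set.ncard_image_of_injOn hinj2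
    have hX3n : Esub.ncard ≤ (D ∩ Set.range (esub H p)).ncard := by
      have himg : esub H p '' Esub ⊆ D ∩ Set.range (esub H p) := by
        rintro _ ⟨e, he, rfl⟩
        exact ⟨he, ⟨e, rfl⟩⟩
      have := Set.ncard_le_ncard himg (Set.toFinite _)
      rwa [Set.ncard_image_of_injective _ esub_injective] at this
    have hkey : S0.ncard + Esub.ncard ≤ p := by omega
    refine ⟨S0 ∪ (fun e : H.edgeSet => ((e : Sym2 V)).out.1) '' Esub, ?_, ?_⟩
    · intro u v huv
      have he : s(u, v) ∈ H.edgeSet := huv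
      by_cases hes : (⟨s(u, v), he⟩ : H.edgeSet) ∈ Esub
      · have hm : (((⟨s(u, v), he⟩ : H.edgeSet) : Sym2 V)).out.1 ∈ s(u, v) :=
          Sym2.out_fst_mem _
        rw [Sym2.mem_iff] at hm
        rcases hm with hm | hm
        · exact Or.inl (Or.inr ⟨_, hes, hm⟩)
        · exact Or.inr (Or.inr ⟨_, hes, hm⟩)
      · by_cases hu0 : u ∈ S0
        · exact Or.inl (Or.inl hu0)
        by_cases hv0 : v ∈ S0
        · exact Or.inr (Or.inl hv0)
        exfalso
        have hDe : esub H p (⟨s(u, v), he⟩ : H.edgeSet) ∈ Dᶜ := fun hmem => hes hmem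
        have hDcu : ∀ x ∈ TreeSet H p u, x ∈ Dᶜ := fun x hx hxD => hu0 ⟨x, hxD, hx⟩
        have hDcv : ∀ x ∈ TreeSet H p v, x ∈ Dᶜ := fun x hx hxD => hv0 ⟨x, hxD, hx⟩
        have hou : orig H p u ∈ Dᶜ := hDcu _ (by rw [mem_TreeSet]; exact Or.inl rfl)
        have hov : orig H p v ∈ Dᶜ := hDcv _ (by rw [mem_TreeSet]; exact Or.inl rfl)
        have hpu : ∀ i, pend H p u i ∈ Dᶜ :=
          fun i => hDcu _ (by rw [mem_TreeSet]; exact Or.inr ⟨i, rfl⟩)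
        have hpv : ∀ i, pend H p v i ∈ Dᶜ :=
          fun i => hDcv _ (by rw [mem_TreeSet]; exact Or.inr ⟨i, rfl⟩)
        have hru : ((spGraph H p f).induce Dᶜ).Reachable
            ⟨esub H p (⟨s(u, v), he⟩ : H.edgeSet), hDe⟩ ⟨orig H p u, hou⟩ :=
          SimpleGraph.Adj.reachable
            ((adj_orig_esub (Sym2.mem_mk_left u v)).symm)
        have hrv : ((spGraph H p f).induce Dᶜ).Reachable
            ⟨esub H p (⟨s(u, v), he⟩ : H.edgeSet), hDe⟩ ⟨orig H p v, hov⟩ :=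
          SimpleGraph.Adj.reachable
            ((adj_orig_esub (Sym2.mem_mk_right u v)).symm)
        have hAle := le_uCompMax (spGraph H p f) D
            ⟨esub H p (⟨s(u, v), he⟩ : H.edgeSet), hDe⟩
            (TreeSet H p u ∪ TreeSet H p v ∪ {esub H p (⟨s(u, v), he⟩ : H.edgeSet)}) ?_
        · have d : Disjoint (TreeSet H p u) (TreeSet H p v) := treeSet_disjoint huv.ne
          have d2 : Disjoint (TreeSet H p u ∪ TreeSet H p v)
              {esub H p (⟨s(u, v), he⟩ : H.edgeSet)} := by
            rw [Set.disjoint_singleton_right]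
            rintro (hmem | hmem) <;> rw [mem_TreeSet] at hmem <;>
              rcases hmem with h' | ⟨i, h'⟩
            · exact orig_ne_esub h'.symm
            · exact pend_ne_esub h'.symm
            · exact orig_ne_esub h'.symm
            · exact pend_ne_esub h'.symm
          rw [Set.ncard_union_eq d2 (Set.toFinite _) (Set.toFinite _),
            Set.ncard_union_eq d (Set.toFinite _) (Set.toFinite _),
            ncard_TreeSet, ncard_TreeSet, Set.ncard_singleton] at hAle
          omega
        · rintro a ((ha | ha) | ha)
          · rw [mem_TreeSet] at ha
            rcases ha with rfl | ⟨i, rfl⟩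
            · exact ⟨hou, hru⟩
            · exact ⟨hpu i, hru.trans (reach_orig_pend hou hpu i)⟩
          · rw [mem_TreeSet] at ha
            rcases ha with rfl | ⟨i, rfl⟩
            · exact ⟨hov, hrv⟩
            · exact ⟨hpv i, hrv.trans (reach_orig_pend hov hpv i)⟩
          · rcases ha with rfl
            exact ⟨hDe, SimpleGraph.Reachable.refl _⟩
    · refine le_trans (Set.ncard_union_le _ _) ?_
      have himg := Set.ncard_image_le
        (f := fun e : H.edgeSet => ((e : Sym2 V)).out.1) (s := Esub) (Set.toFinite _)
      omega
  · -- backward direction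
    rintro ⟨S, hcov, hcard⟩
    refine le_trans (uvi_le _ (Dset H p S)) ?_
    have h1 : (Dset H p S).ncard ≤ 2 * p + 4 := by
      refine le_trans (Set.ncard_union_le _ _) ?_
      have ha : (orig H p '' S).ncard ≤ p :=
        le_trans (Set.ncard_image_le (Set.toFinite _)) hcard
      have hb : (Set.range (ctr H p (V := V))).ncard = p + 4 := by
        rw [ncard_range ctr_injective]; simp
      omega
    have h2 : uCompMax (spGraph H p f) (Dset H p S) ≤ p + 6 :=
      uCompMax_le _ _ _ (fun C => comp_bound hreg hcov C)
    show (Dset H p S).ncard + uCompMax (spGraph H p f) (Dset H p S) ≤ 3 * p + 10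
    omega
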